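/- Suppose μ ∈ K* + Im(A*) and for every z ∈ Ext(K) we have ⊥_z ∩ (μ − Im(A*)) = ∅, where ⊥_z = {γ ∈ K* : ⟨γ,z⟩ = 0}. Then there exists γ̄ ∈ int(K*) ∩ (μ − Im(A*)). -/

import Mathlib

open RealInnerProductSpace

noncomputable section

variable {E F : Type*} [NormedAddCommGroup E] [InnerProductSpace ℝ E]
  [NormedAddCommGroup F] [InnerProductSpace ℝ F]
  [FiniteDimensional ℝ E] [FiniteDimensional ℝ F]

/-- The dual cone `K* = {y : ⟨x,y⟩ ≥ 0 for all x ∈ K}`. -/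
def DualCone (K : Set E) : Set E := {y | ∀ x ∈ K, 0 ≤ ⟪x, y⟫}

/-- A regular cone: closed, convex, a cone, pointed, and full-dimensional. -/
def IsRegularCone (K : Set E) : Prop :=
  IsClosed K ∧ Convex ℝ K ∧ (∀ c : ℝ, 0 < c → ∀ x ∈ K, c • x ∈ K) ∧
    (K ∩ (-K) ⊆ {(0 : E)}) ∧ (interior K).Nonempty

/-- `(μ; η)` is a valid linear inequality for `S`: `⟨μ,x⟩ ≥ η` on `S`. -/
def ValidIneq (S : Set E) (μ : E) (η : ℝ) : Prop := ∀ x ∈ S, η ≤ ⟪μ, x⟫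

/-- `(μ; η)` is a `K`-minimal valid inequality for `S`. -/
def KMinimal (K S : Set E) (μ : E) (η : ℝ) : Prop :=
  μ ≠ 0 ∧ ValidIneq S μ η ∧
    ∀ ρ : E, ∀ ρ₀ : ℝ, ValidIneq S ρ ρ₀ → ρ ≠ μ → μ - ρ ∈ DualCone K → ρ₀ < η

/-- `x` generates an extreme ray of the cone `K`. -/
def IsExtremeRay (K : Set E) (x : E) : Prop :=
  x ∈ K ∧ x ≠ 0 ∧ ∀ y ∈ K, ∀ z ∈ K, x = y + z → ∃ t : ℝ, 0 ≤ t ∧ y = t • x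

/-- Support function of a set `D`. -/
def SuppFn (D : Set F) (z : F) : ℝ := sSup ((fun lam => ⟪z, lam⟫) '' D)

/-- The cut generating set `D_μ = {λ : μ - A*λ ∈ K*}`. -/
def CutGenSet (K : Set E) (A : E →ₗ[ℝ] F) (μ : E) : Set F :=
  {lam | μ - LinearMap.adjoint A lam ∈ DualCone K}

/-- `(μ; η)` is a `K`-sublinear inequality for `S`: condition (A.1(α)) for every
extreme ray α of `K*`, together with validity (A.2). -/
def KSublinear (K S : Set E) (A : E →ₗ[ℝ] F) (μ : E) (η : ℝ) : Prop :=
  μ ≠ 0 ∧ ValidIneq S μ η ∧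
    ∀ α : E, IsExtremeRay (DualCone K) α →
      ∀ u : E, A u = 0 → (∀ v : E, IsExtremeRay K v → ⟪α, v⟫ • u + v ∈ K) →
        0 ≤ ⟪μ, u⟫


/-!
Write `μ = γ + A* λ` with `γ ∈ K*`; we show that `γ` itself lies in `int K*`, i.e. that it is
strictly positive on `K \ {0}`. Otherwise the exposed face `K ∩ γ^⊥` is a nonzero closed cone.
Since `K` is pointed, `K*` has an interior point `e`, and the slice `{⟪·, e⟫ = 1}` of the face
is a nonempty compact set; by Krein–Milman it has an extreme point, which spans an extreme ray
`z` of the face and hence of `K`. Then `γ ∈ ⊥_z ∩ (μ − Im A*)`, contradicting the hypothesis.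
-/

section Cones

open Metric Topology

variable {V : Type*} [NormedAddCommGroup V] [InnerProductSpace ℝ V]

lemma dualCone_anti {C D : Set V} (h : C ⊆ D) : DualCone D ⊆ DualCone C :=
  fun _ hy x hx => hy x (h hx)

lemma convex_dualCone (C : Set V) : Convex ℝ (DualCone C) :=
  fun _ hy _ hz _ _ ha hb _ x hx => by
    rw [inner_add_right, real_inner_smul_right, real_inner_smul_right]
    exact add_nonneg (mul_nonneg ha (hy x hx)) (mul_nonneg hb (hz x hx))

lemma dualCone_dualCone_subset [CompleteSpace V] {C : Set V} (hcl : IsClosed C)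
    (hconv : Convex ℝ C) (hsc : ∀ c : ℝ, 0 < c → ∀ x ∈ C, c • x ∈ C) (hne : C.Nonempty) :
    DualCone (DualCone C) ⊆ C := by
  intro v hv
  by_contra hvC
  have hcone : (ConvexCone.hull ℝ C : Set V) = C := by
    refine Set.Subset.antisymm (fun x hx => ?_) ConvexCone.subset_hull
    obtain ⟨c, hc, y, hy, rfl⟩ := (ConvexCone.mem_hull_of_convex hconv).1 hx
    exact hsc c hc y hy
  obtain ⟨P, hP⟩ : ∃ P : ProperCone ℝ V, (P : ConvexCone ℝ V) = ConvexCone.hull ℝ C :=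
    CanLift.prf _ (by rw [hcone]; exact ⟨hne, hcl⟩)
  have hPC : (P : Set V) = C := by rw [← hcone, ← hP]; rfl
  obtain ⟨y, hy, hvy⟩ := P.hyperplane_separation' (x₀ := v) (by rwa [← SetLike.mem_coe, hPC])
  have := hv y fun x hx => hy x (by rwa [← SetLike.mem_coe, hPC])
  rw [real_inner_comm] at this
  linarith

lemma exists_pos_mul_norm_le_inner_of_mem_interior_dualCone {C : Set V} {e : V}
    (he : e ∈ interior (DualCone C)) :
    ∃ δ > 0, ∀ x ∈ C, δ * ‖x‖ ≤ ⟪x, e⟫ := by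
  obtain ⟨δ, hδ, hball⟩ := nhds_basis_closedBall.mem_iff.1 (mem_interior_iff_mem_nhds.1 he)
  refine ⟨δ, hδ, fun x hx => ?_⟩
  rcases eq_or_ne x 0 with rfl | hx0
  · simp
  have hxn : 0 < ‖x‖ := norm_pos_iff.2 hx0
  have hmem : e - (δ / ‖x‖) • x ∈ DualCone C := hball <| by
    rw [mem_closedBall, dist_eq_norm, sub_sub_cancel_left, norm_neg, norm_smul, Real.norm_eq_abs,
      abs_of_pos (div_pos hδ hxn), div_mul_cancel₀ _ hxn.ne']
  have := hmem x hx
  rw [inner_sub_right, real_inner_smul_right, real_inner_self_eq_norm_sq] at this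
  calc δ * ‖x‖ = δ / ‖x‖ * ‖x‖ ^ 2 := by field_simp
  _ ≤ ⟪x, e⟫ := by linarith

lemma mem_interior_dualCone_of_inner_pos [FiniteDimensional ℝ V] {C : Set V} (hcl : IsClosed C)
    (hsc : ∀ c : ℝ, 0 < c → ∀ x ∈ C, c • x ∈ C) {γ : V}
    (hpos : ∀ x ∈ C, x ≠ 0 → 0 < ⟪x, γ⟫) : γ ∈ interior (DualCone C) := by
  have hnear : ∀ᶠ γ' in 𝓝 γ, ∀ x ∈ C ∩ sphere 0 1, 0 < ⟪x, γ'⟫ :=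
    ((isCompact_sphere 0 1).inter_left hcl).eventually_forall_of_forall_eventually fun x hx =>
      ((continuous_snd.inner continuous_fst).tendsto (γ, x)).eventually_const_lt
        (hpos x hx.1 (ne_zero_of_mem_unit_sphere ⟨x, hx.2⟩))
  refine mem_interior_iff_mem_nhds.2 (hnear.mono fun γ' h x hx => ?_)
  rcases eq_or_ne x 0 with rfl | hx0
  · simp
  have hxn : 0 < ‖x‖ := norm_pos_iff.2 hx0
  have := h (‖x‖⁻¹ • x) ⟨hsc _ (inv_pos.2 hxn) x hx, by simp [norm_smul, hxn.ne']⟩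
  rw [real_inner_smul_left] at this
  exact (pos_of_mul_pos_right this (inv_pos.2 hxn).le).le


lemma interior_dualCone_nonempty [FiniteDimensional ℝ V] {C : Set V} (hcl : IsClosed C)
    (hconv : Convex ℝ C) (hsc : ∀ c : ℝ, 0 < c → ∀ x ∈ C, c • x ∈ C) (hpt : C ∩ -C ⊆ {0}) :
    (interior (DualCone C)).Nonempty := by
  rcases C.eq_empty_or_nonempty with rfl | hne
  · simp [DualCone]
  have h0 : (0 : V) ∈ DualCone C := fun x _ => (inner_zero_right x).ge
  rw [(convex_dualCone C).interior_nonempty_iff_affineSpan_eq_top,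
    AffineSubspace.affineSpan_eq_top_iff_vectorSpan_eq_top_of_nonempty ℝ V V ⟨0, h0⟩,
    vectorSpan_eq_span_vsub_set_right ℝ h0, ← Submodule.orthogonal_eq_bot_iff]
  simp only [vsub_eq_sub, sub_zero, Set.image_id']
  -- a vector orthogonal to `C*` lies in `C** = C`, and so does its negative
  refine (Submodule.eq_bot_iff _).2 fun v hv => hpt ⟨?_, ?_⟩
  all_goals
    refine dualCone_dualCone_subset hcl hconv hsc hne fun γ hγ => ?_
    have := (Submodule.mem_orthogonal _ v).1 hv γ (Submodule.subset_span hγ)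
  · exact this.ge
  · simp [inner_neg_right, this]

def coneBase (C : Set V) (e : V) : Set V := {y ∈ C | ⟪y, e⟫ = 1}

lemma inv_inner_smul_mem_coneBase {C : Set V} (hsc : ∀ c : ℝ, 0 < c → ∀ x ∈ C, c • x ∈ C)
    {e x : V} (hx : x ∈ C) (hxe : 0 < ⟪x, e⟫) : ⟪x, e⟫⁻¹ • x ∈ coneBase C e :=
  ⟨hsc _ (inv_pos.2 hxe) x hx, by rw [real_inner_smul_left, inv_mul_cancel₀ hxe.ne']⟩

lemma isExtremeRay_of_mem_extremePoints_coneBase {C : Set V}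
    (hsc : ∀ c : ℝ, 0 < c → ∀ x ∈ C, c • x ∈ C) {e : V} (he : ∀ x ∈ C, x ≠ 0 → 0 < ⟪x, e⟫)
    {x : V} (hx : x ∈ (coneBase C e).extremePoints ℝ) : IsExtremeRay C x := by
  obtain ⟨⟨hxC, hxe⟩, hext⟩ := mem_extremePoints.1 hx
  have hx0 : x ≠ 0 := by rintro rfl; simp at hxe
  refine ⟨hxC, hx0, fun y hy w hw hsum => ?_⟩
  rcases eq_or_ne y 0 with rfl | hy0
  · exact ⟨0, le_rfl, by simp⟩
  rcases eq_or_ne w 0 with rfl | hw0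
  · exact ⟨1, zero_le_one, by simp [hsum]⟩
  have ha := he y hy hy0
  have hb := he w hw hw0
  have hseg : x ∈ openSegment ℝ (⟪y, e⟫⁻¹ • y) (⟪w, e⟫⁻¹ • w) :=
    ⟨⟪y, e⟫, ⟪w, e⟫, ha, hb, by rw [← inner_add_left, ← hsum, hxe],
      by rw [smul_inv_smul₀ ha.ne', smul_inv_smul₀ hb.ne', hsum]⟩
  obtain ⟨hyx, -⟩ := hext _ (inv_inner_smul_mem_coneBase hsc hy ha) _
    (inv_inner_smul_mem_coneBase hsc hw hb) hseg
  exact ⟨⟪y, e⟫, ha.le, by rw [← hyx, smul_inv_smul₀ ha.ne']⟩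

lemma exists_isExtremeRay [FiniteDimensional ℝ V] {C : Set V} (hcl : IsClosed C)
    (hsc : ∀ c : ℝ, 0 < c → ∀ x ∈ C, c • x ∈ C) {e : V} (he : e ∈ interior (DualCone C))
    {z : V} (hz : z ∈ C) (hz0 : z ≠ 0) : ∃ x, IsExtremeRay C x := by
  obtain ⟨δ, hδ, hδe⟩ := exists_pos_mul_norm_le_inner_of_mem_interior_dualCone he
  have hpos : ∀ x ∈ C, x ≠ 0 → 0 < ⟪x, e⟫ := fun x hx hx0 =>
    (mul_pos hδ (norm_pos_iff.2 hx0)).trans_le (hδe x hx)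
  have hBcl : IsClosed (coneBase C e) := hcl.inter (isClosed_eq (by fun_prop) continuous_const)
  have hbdd : Bornology.IsBounded (coneBase C e) :=
    (isBounded_closedBall (x := 0) (r := 1 / δ)).subset fun y hy => by
      rw [mem_closedBall_zero_iff, le_div_iff₀' hδ, ← hy.2]
      exact hδe y hy.1
  obtain ⟨x, hx⟩ := (isCompact_of_isClosed_isBounded hBcl hbdd).extremePoints_nonempty
    ⟨_, inv_inner_smul_mem_coneBase hsc hz (hpos z hz hz0)⟩
  exact ⟨x, isExtremeRay_of_mem_extremePoints_coneBase hsc hpos hx⟩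

lemma IsExtremeRay.of_inter_inner_eq_zero {K : Set V} {γ v : V} (hγ : γ ∈ DualCone K)
    (hv : IsExtremeRay (K ∩ {w | ⟪w, γ⟫ = 0}) v) : IsExtremeRay K v := by
  obtain ⟨⟨hvK, hvγ⟩, hv0, hext⟩ := hv
  refine ⟨hvK, hv0, fun y hy w hw hsum => hext y ⟨hy, ?_⟩ w ⟨hw, ?_⟩ hsum⟩
  all_goals
    have hsum' : ⟪y, γ⟫ + ⟪w, γ⟫ = 0 := by rw [← inner_add_left, ← hsum]; exact hvγ
    have := hγ y hy
    have := hγ w hw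
    simp only [Set.mem_ofPred_eq]
    linarith

end Cones

/-- If `⊥_z ∩ (μ − Im(A*)) = ∅` for every extreme ray `z` of `K`, then
`int(K*) ∩ (μ − Im(A*)) ≠ ∅`. -/
theorem stmt15 (K : Set E) (A : E →ₗ[ℝ] F)
    (hK : IsRegularCone K)
    (μ : E) (hμ : ∃ γ ∈ DualCone K, ∃ lam : F, μ = γ + LinearMap.adjoint A lam)
    (hperp : ∀ z : E, IsExtremeRay K z →
      ¬ ∃ γ : E, γ ∈ DualCone K ∧ ⟪γ, z⟫ = 0 ∧
        ∃ lam : F, γ = μ - LinearMap.adjoint A lam) :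
    ∃ γ : E, γ ∈ interior (DualCone K) ∧
      ∃ lam : F, γ = μ - LinearMap.adjoint A lam := by
  obtain ⟨hcl, hconv, hsc, hpt, -⟩ := hK
  obtain ⟨γ, hγ, lam, rfl⟩ := hμ
  refine ⟨γ, mem_interior_dualCone_of_inner_pos hcl hsc fun x hx hx0 => ?_, lam,
    (add_sub_cancel_right _ _).symm⟩
  by_contra! hxγ
  obtain ⟨e, he⟩ := interior_dualCone_nonempty hcl hconv hsc hpt
  obtain ⟨v, hv⟩ := exists_isExtremeRay (C := K ∩ {w | ⟪w, γ⟫ = 0})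
    (hcl.inter (isClosed_eq (by fun_prop) continuous_const))
    (fun c hc w hw => ⟨hsc c hc w hw.1, by simp [real_inner_smul_left, hw.2.out]⟩)
    (interior_mono (dualCone_anti Set.inter_subset_left) he)
    ⟨hx, le_antisymm hxγ (hγ x hx)⟩ hx0
  exact hperp v (hv.of_inter_inner_eq_zero hγ)
    ⟨γ, hγ, real_inner_comm γ v ▸ hv.1.2, lam, (add_sub_cancel_right _ _).symm⟩
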